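/- Let ν be a Borel probability measure on ℝ^d with continuous positive density, a ∈ (1/(d+1), 1/d), with sup_x depth_ν(x) < a and Tukey median at 0. Suppose half-spaces H₁,…,H_{d+1} satisfy 0 ∈ ∂Hᵢ, ⋂Hᵢ = {0}, ν(Hᵢ) = depth_ν(0) for all i. If o ≠ 0, then depth_ν(o) < depth_ν(0). -/

import Mathlib

/-!
Since the half-spaces `⟪nᵢ, ·⟫ ≤ 0` meet only in `0`, a point `o ≠ 0` satisfies
`⟪nᵢ, o⟫ < 0` for some `i`. The half-space `⟪nᵢ, ·⟫ ≤ ⟪nᵢ, o⟫` contains `o`, and it misses the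
nonempty open strip `⟪nᵢ, o⟫ < ⟪nᵢ, ·⟫ < 0` of the half-space `⟪nᵢ, ·⟫ ≤ 0`, which has positive
measure because the density is positive. Hence `depth o` is strictly below `ν(Hᵢ) = depth 0`.
-/

open MeasureTheory

/-- The half-space (Tukey) depth of a point. -/
noncomputable def depthPt {W : Type*} [NormedAddCommGroup W] [InnerProductSpace ℝ W]
    [MeasurableSpace W] (ν : Measure W) (x : W) : ℝ :=
  sInf {r : ℝ | ∃ (m : W) (c : ℝ), m ≠ 0 ∧ (inner ℝ m x : ℝ) ≤ c ∧
    r = (ν {y : W | (inner ℝ m y : ℝ) ≤ c}).toReal}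

section HalfSpaces

variable {W : Type*} [NormedAddCommGroup W] [InnerProductSpace ℝ W]

theorem exists_inner_neg_of_iInter_halfSpaces_eq_singleton {ι : Type*} {n : ι → W}
    (hgen : ⋂ i, {x : W | inner ℝ (n i) x ≤ 0} = {0}) {o : W} (ho : o ≠ 0) :
    ∃ i, inner ℝ (n i) o < 0 := by
  have hno : -o ∉ ⋂ i, {x : W | inner ℝ (n i) x ≤ 0} := by
    simpa [hgen] using ho
  simpa only [Set.mem_iInter, Set.mem_ofPred_eq, not_forall, not_le, inner_neg_right,
    neg_pos] using hno

theorem depthPt_le_measure_halfSpace [MeasurableSpace W] (ν : Measure W) {m x : W} {c : ℝ}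
    (hm : m ≠ 0) (hx : inner ℝ m x ≤ c) :
    depthPt ν x ≤ (ν {y : W | inner ℝ m y ≤ c}).toReal :=
  csInf_le ⟨0, by rintro r ⟨_, _, _, _, rfl⟩; exact ENNReal.toReal_nonneg⟩ ⟨m, c, hm, hx, rfl⟩

theorem measure_halfSpace_lt_of_lt [MeasurableSpace W] [OpensMeasurableSpace W]
    (ν : Measure W) [IsFiniteMeasure ν] [ν.IsOpenPosMeasure] {m : W} (hm : m ≠ 0) {c c' : ℝ}
    (hcc' : c < c') :
    ν {y : W | inner ℝ m y ≤ c} < ν {y : W | inner ℝ m y ≤ c'} := by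
  have hcont : Continuous fun y : W => inner ℝ m y := continuous_const.inner continuous_id
  set strip : Set W := {y | inner ℝ m y ∈ Set.Ioo c c'}
  have hstrip_open : IsOpen strip := isOpen_Ioo.preimage hcont
  have hstrip_nonempty : strip.Nonempty := by
    refine ⟨((c + c') / 2 / ‖m‖ ^ 2) • m, ?_⟩
    have hm' : ‖m‖ ^ 2 ≠ 0 := by positivity
    simp only [strip, Set.mem_ofPred_eq, real_inner_smul_right, real_inner_self_eq_norm_sq,
      div_mul_cancel₀ _ hm', Set.mem_Ioo]
    constructor <;> linarith
  have hdisj : Disjoint {y : W | inner ℝ m y ≤ c} strip :=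
    Set.disjoint_left.mpr fun y hy hy' => (not_lt.mpr hy) hy'.1
  have hsub : {y : W | inner ℝ m y ≤ c} ∪ strip ⊆ {y : W | inner ℝ m y ≤ c'} := by
    rintro y (hy | hy)
    · exact hy.trans hcc'.le
    · exact hy.2.le
  calc ν {y : W | inner ℝ m y ≤ c}
      < ν {y : W | inner ℝ m y ≤ c} + ν strip :=
        ENNReal.lt_add_right (measure_ne_top ν _) (hstrip_open.measure_ne_zero ν hstrip_nonempty)
    _ = ν ({y : W | inner ℝ m y ≤ c} ∪ strip) :=
        (measure_union hdisj hstrip_open.measurableSet).symm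
    _ ≤ ν {y : W | inner ℝ m y ≤ c'} := measure_mono hsub

end HalfSpaces

theorem isOpenPosMeasure_withDensity_of_pos {X : Type*} [TopologicalSpace X] [MeasurableSpace X]
    [OpensMeasurableSpace X] (μ : Measure X) [μ.IsOpenPosMeasure] {f : X → ℝ}
    (hf : Continuous f) (hfpos : ∀ x, 0 < f x) :
    (μ.withDensity fun x => ENNReal.ofReal (f x)).IsOpenPosMeasure :=
  (withDensity_absolutelyContinuous' hf.measurable.ennreal_ofReal.aemeasurable
    (ae_of_all _ fun x => ENNReal.ofReal_pos.mpr (hfpos x) |>.ne')).isOpenPosMeasure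

theorem stmt18_general (d : ℕ)
    (ν : Measure (EuclideanSpace ℝ (Fin d))) [IsProbabilityMeasure ν]
    (f : EuclideanSpace ℝ (Fin d) → ℝ)
    (hf : Continuous f) (hfpos : ∀ x, 0 < f x)
    (hν : ν = volume.withDensity (fun x => ENNReal.ofReal (f x)))
    (n : Fin (d + 1) → EuclideanSpace ℝ (Fin d))
    (hgen : (⋂ i, {x : EuclideanSpace ℝ (Fin d) | (inner ℝ (n i) x : ℝ) ≤ 0}) = {0})
    (hwgt : ∀ i, (ν {x : EuclideanSpace ℝ (Fin d) | (inner ℝ (n i) x : ℝ) ≤ 0}).toReal =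
      depthPt ν (0 : EuclideanSpace ℝ (Fin d))) :
    ∀ o : EuclideanSpace ℝ (Fin d), o ≠ 0 →
      depthPt ν o < depthPt ν (0 : EuclideanSpace ℝ (Fin d)) := by
  intro o ho
  have : ν.IsOpenPosMeasure := hν ▸ isOpenPosMeasure_withDensity_of_pos volume hf hfpos
  obtain ⟨i, hi⟩ := exists_inner_neg_of_iInter_halfSpaces_eq_singleton hgen ho
  have hni : n i ≠ 0 := by
    intro h
    simp [h] at hi
  calc depthPt ν o
      ≤ (ν {y | inner ℝ (n i) y ≤ inner ℝ (n i) o}).toReal :=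
        depthPt_le_measure_halfSpace ν hni le_rfl
    _ < (ν {y | inner ℝ (n i) y ≤ 0}).toReal :=
        (ENNReal.toReal_lt_toReal (measure_ne_top ν _) (measure_ne_top ν _)).mpr
          (measure_halfSpace_lt_of_lt ν hni hi)
    _ = depthPt ν 0 := hwgt i

theorem stmt18 (d : ℕ) (a : ℝ) (ha : 1 / (d + 1) < a) (ha' : a < 1 / d)
    (ν : Measure (EuclideanSpace ℝ (Fin d))) [IsProbabilityMeasure ν]
    (f : EuclideanSpace ℝ (Fin d) → ℝ)
    (hf : Continuous f) (hfpos : ∀ x, 0 < f x)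
    (hν : ν = volume.withDensity (fun x => ENNReal.ofReal (f x)))
    (hsup : (⨆ x, depthPt ν x) < a)
    (hmed : ∀ x, depthPt ν x ≤ depthPt ν (0 : EuclideanSpace ℝ (Fin d)))
    (n : Fin (d + 1) → EuclideanSpace ℝ (Fin d))
    (hunit : ∀ i, ‖n i‖ = 1)
    (hgen : (⋂ i, {x : EuclideanSpace ℝ (Fin d) | (inner ℝ (n i) x : ℝ) ≤ 0}) = {0})
    (hwgt : ∀ i, (ν {x : EuclideanSpace ℝ (Fin d) | (inner ℝ (n i) x : ℝ) ≤ 0}).toReal =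
      depthPt ν (0 : EuclideanSpace ℝ (Fin d))) :
    ∀ o : EuclideanSpace ℝ (Fin d), o ≠ 0 →
      depthPt ν o < depthPt ν (0 : EuclideanSpace ℝ (Fin d)) :=
  stmt18_general d ν f hf hfpos hν n hgen hwgt
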